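/- arXiv:1703.06530 — 6 statements merged into one kernel-verified Lean document; each statement's English description precedes it below -/
import Mathlib

section
/- Let a, b be coprime integers with 5 dividing a + b. Then the 5-adic valuation of φ₅(a,b) = a^4 - a^3 b + a^2 b^2 - a b^3 + b^4 is exactly 1. -/
/-- For coprime integers `a, b` with `5 ∣ a + b`, the 5-adic valuation of
`φ₅(a,b) = a^4 - a^3*b + a^2*b^2 - a*b^3 + b^4` is exactly `1`. -/
theorem padicValInt_five_phi_five (a b : ℤ) (hab : IsCoprime a b) (h5 : (5 : ℤ) ∣ a + b) :
    padicValInt 5 (a ^ 4 - a ^ 3 * b + a ^ 2 * b ^ 2 - a * b ^ 3 + b ^ 4) = 1 := by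
  obtain ⟨k, hk⟩ := h5
  have hb : b = 5 * k - a := by linarith
  have ha5 : ¬ (5 : ℤ) ∣ a := by
    intro hda
    have hdb : (5 : ℤ) ∣ b := by
      have := dvd_sub ⟨k, hk⟩ hda
      simpa using this
    have : IsUnit (5 : ℤ) := hab.isUnit_of_dvd' hda hdb
    norm_num [Int.isUnit_iff] at this
  set c : ℤ := a ^ 4 + 5 * (-2 * k * a ^ 3 + 10 * k ^ 2 * a ^ 2 - 25 * k ^ 3 * a + 25 * k ^ 4) with hc
  have hphi : a ^ 4 - a ^ 3 * b + a ^ 2 * b ^ 2 - a * b ^ 3 + b ^ 4 = c * 5 := by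
    rw [hb, hc]; ring
  have hc5 : ¬ (5 : ℤ) ∣ c := by
    intro hd
    apply ha5
    have h4 : (5 : ℤ) ∣ a ^ 4 := by
      have := dvd_sub hd (Dvd.intro _ rfl : (5:ℤ) ∣ 5 * (-2 * k * a ^ 3 + 10 * k ^ 2 * a ^ 2 - 25 * k ^ 3 * a + 25 * k ^ 4))
      simpa [hc] using this
    exact (Int.Prime.dvd_pow' (by norm_num) h4)
  have hcne : c ≠ 0 := by intro h0; rw [h0] at hc5; exact hc5 (dvd_zero _)
  haveI : Fact (Nat.Prime 5) := ⟨by norm_num⟩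
  rw [hphi]
  have := padicValInt_mul_eq_succ (p := 5) c hcne
  rw [show ((5:ℕ):ℤ) = (5:ℤ) by norm_num] at this
  rw [this, padicValInt.eq_zero_of_not_dvd (by exact_mod_cast hc5)]
end

section
/- Let a, b, c be coprime integers with a^5 + b^5 = c^p for a prime p ≥ 7, such that a*b*c ≠ 0 and 2 divides a + b. Then 8 divides a + b. -/
/-!
Write `a ^ 5 + b ^ 5 = (a + b) * φ₅(a, b)`. Since `2 ∣ a + b`, the prime `2` divides `c`, so
coprimality forces `a` and `b` to be odd; then `φ₅(a, b)` is odd, and the whole factor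
`2 ^ p ∣ c ^ p` must go into `a + b`.
-/

def phi5 (a b : ℤ) : ℤ := a ^ 4 - a ^ 3 * b + a ^ 2 * b ^ 2 - a * b ^ 3 + b ^ 4

lemma add_mul_phi5 (a b : ℤ) : (a + b) * phi5 a b = a ^ 5 + b ^ 5 := by
  unfold phi5; ring

lemma odd_phi5 {a b : ℤ} (h : Odd a ∨ Odd b) : Odd (phi5 a b) := by
  simp only [← ZMod.intCast_eq_one_iff_odd] at h ⊢
  unfold phi5
  push_cast
  generalize (a : ZMod 2) = x at h ⊢
  generalize (b : ZMod 2) = y at h ⊢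
  revert x y; decide

lemma Prime.pow_dvd_of_mul_eq_pow {M : Type*} [CommMonoidWithZero M] [IsCancelMulZero M]
    {q x y c : M} (hq : Prime q) (hqx : q ∣ x) (hqy : ¬ q ∣ y) {n : ℕ}
    (h : x * y = c ^ n) : q ^ n ∣ x := by
  have hqc : q ∣ c := hq.dvd_of_dvd_pow (h ▸ dvd_mul_of_dvd_left hqx y)
  exact hq.pow_dvd_of_dvd_mul_right n hqy (h ▸ pow_dvd_pow_of_dvd hqc n)

lemma Int.odd_of_gcd_gcd_eq_one {a b c : ℤ} (h : Int.gcd (Int.gcd a b) c = 1)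
    (hab : 2 ∣ a + b) (hc : 2 ∣ c) : Odd a := by
  rw [← Int.not_even_iff_odd, even_iff_two_dvd]
  intro ha
  have hb : 2 ∣ b := (dvd_add_right ha).mp hab
  have h2 : (2 : ℤ) ∣ (Int.gcd (Int.gcd a b) c : ℤ) :=
    Int.dvd_coe_gcd (Int.dvd_coe_gcd ha hb) hc
  rw [h] at h2
  norm_num at h2

theorem eight_dvd_of_two_dvd_fermat55p_general (a b c : ℤ) (p : ℕ) (hp7 : 7 ≤ p)
    (hcop : Int.gcd (Int.gcd a b) c = 1) (heq : a ^ 5 + b ^ 5 = c ^ p)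
    (h2 : (2 : ℤ) ∣ a + b) : (8 : ℤ) ∣ a + b := by
  have hfac : (a + b) * phi5 a b = c ^ p := (add_mul_phi5 a b).trans heq
  have hc : 2 ∣ c := Int.prime_two.dvd_of_dvd_pow (hfac ▸ dvd_mul_of_dvd_left h2 _)
  have ha : Odd a := Int.odd_of_gcd_gcd_eq_one hcop h2 hc
  have hφ : ¬ 2 ∣ phi5 a b := by
    rw [← even_iff_two_dvd, Int.not_even_iff_odd]
    exact odd_phi5 (.inl ha)
  have h2p : 2 ^ p ∣ a + b := Prime.pow_dvd_of_mul_eq_pow Int.prime_two h2 hφ hfac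
  exact (pow_dvd_pow 2 (by omega : 3 ≤ p)).trans h2p

/-- If `a, b, c` are coprime integers with `a^5 + b^5 = c^p` for a prime `p ≥ 7`,
`a*b*c ≠ 0` and `2 ∣ a + b`, then `8 ∣ a + b`. -/
theorem eight_dvd_of_two_dvd_fermat55p (a b c : ℤ) (p : ℕ) (hp : p.Prime) (hp7 : 7 ≤ p)
    (hcop : Int.gcd (Int.gcd a b) c = 1) (heq : a ^ 5 + b ^ 5 = c ^ p)
    (hne : a * b * c ≠ 0) (h2 : (2 : ℤ) ∣ a + b) : (8 : ℤ) ∣ a + b :=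
  eight_dvd_of_two_dvd_fermat55p_general a b c p hp7 hcop heq h2
end

section
/- Let a, b be coprime integers and ℓ ≠ 13 a prime. If ℓ divides φ₁₃(a,b) = (a^13 + b^13)/(a + b) (where if a+b=0 interpret φ₁₃(a,b) directly as the degree-12 form), then ℓ ≡ 1 (mod 13). -/
/-- If `a, b` are coprime integers and `ℓ ≠ 13` is a prime dividing the degree-12 form
`φ₁₃(a,b)`, then `ℓ ≡ 1 (mod 13)`. -/
theorem prime_dvd_phi_thirteen_mod_thirteen (a b : ℤ) (hab : IsCoprime a b) (ℓ : ℕ)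
    (hℓ : ℓ.Prime) (h13 : ℓ ≠ 13)
    (hdvd : (ℓ : ℤ) ∣ a ^ 12 - a ^ 11 * b + a ^ 10 * b ^ 2 - a ^ 9 * b ^ 3 + a ^ 8 * b ^ 4
      - a ^ 7 * b ^ 5 + a ^ 6 * b ^ 6 - a ^ 5 * b ^ 7 + a ^ 4 * b ^ 8 - a ^ 3 * b ^ 9
      + a ^ 2 * b ^ 10 - a * b ^ 11 + b ^ 12) :
    ℓ % 13 = 1 := by
  haveI : Fact ℓ.Prime := ⟨hℓ⟩
  set A : ZMod ℓ := (a : ZMod ℓ) with hA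
  set B : ZMod ℓ := (b : ZMod ℓ) with hB
  have hphi : A ^ 12 - A ^ 11 * B + A ^ 10 * B ^ 2 - A ^ 9 * B ^ 3 + A ^ 8 * B ^ 4
      - A ^ 7 * B ^ 5 + A ^ 6 * B ^ 6 - A ^ 5 * B ^ 7 + A ^ 4 * B ^ 8 - A ^ 3 * B ^ 9
      + A ^ 2 * B ^ 10 - A * B ^ 11 + B ^ 12 = 0 := by
    have := (ZMod.intCast_zmod_eq_zero_iff_dvd _ ℓ).mpr hdvd
    push_cast at this
    linear_combination this
  obtain ⟨u, v, huv⟩ := hab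
  have hcop : (u : ZMod ℓ) * A + (v : ZMod ℓ) * B = 1 := by
    have := congrArg (fun x : ℤ => (x : ZMod ℓ)) huv
    push_cast at this
    linear_combination this
  have hBne : B ≠ 0 := by
    intro hB0
    have hA12 : A ^ 12 = 0 := by rw [hB0] at hphi; linear_combination hphi
    have hA0 : A = 0 := pow_eq_zero_iff (n := 12) (by norm_num) |>.mp hA12
    rw [hA0, hB0] at hcop
    simp at hcop
  have h13eq : A ^ 13 = -B ^ 13 := by linear_combination (A + B) * hphi
  set w : ZMod ℓ := -A * B⁻¹ with hw
  have hw13 : w ^ 13 = 1 := by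
    have hB13 : B ^ 13 ≠ 0 := pow_ne_zero _ hBne
    rw [hw]
    field_simp
    linear_combination -h13eq
  have hwne : w ≠ 1 := by
    intro hw1
    have hAB : A = -B := by
      have h := hw1
      rw [hw] at h
      field_simp at h
      linear_combination -h
    rw [hAB] at hphi
    have h13z : (13 : ZMod ℓ) = 0 := by
      have hB12 : (B ^ 12 : ZMod ℓ) ≠ 0 := pow_ne_zero _ hBne
      have : (13 : ZMod ℓ) * B ^ 12 = 0 := by linear_combination hphi
      rcases mul_eq_zero.mp this with h | h
      · exact h
      · exact absurd h hB12
    have hdl : (ℓ : ℕ) ∣ 13 :=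
      (ZMod.natCast_eq_zero_iff 13 ℓ).mp (by exact_mod_cast h13z)
    exact h13 ((Nat.prime_dvd_prime_iff_eq hℓ (by norm_num)).mp hdl)
  haveI : Fact (Nat.Prime 13) := ⟨by norm_num⟩
  have hord : orderOf w = 13 := orderOf_eq_prime hw13 hwne
  have hwne0 : w ≠ 0 := by
    intro h0
    rw [h0] at hw13
    simp at hw13
  have hpow : w ^ (ℓ - 1) = 1 := ZMod.pow_card_sub_one_eq_one hwne0
  have hdvd13 : 13 ∣ ℓ - 1 := hord ▸ orderOf_dvd_of_pow_eq_one hpow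
  have h2 : 2 ≤ ℓ := hℓ.two_le
  omega
end

section
/- Let a, b be coprime integers. Any common prime divisor of a + b and φ₁₃(a,b) equals 13, and if 13 divides a + b then the 13-adic valuation of φ₁₃(a,b) equals 1. -/
private lemma phi_key (a b : ℤ) :
    a ^ 12 - a ^ 11 * b + a ^ 10 * b ^ 2 - a ^ 9 * b ^ 3 + a ^ 8 * b ^ 4
        - a ^ 7 * b ^ 5 + a ^ 6 * b ^ 6 - a ^ 5 * b ^ 7 + a ^ 4 * b ^ 8 - a ^ 3 * b ^ 9
        + a ^ 2 * b ^ 10 - a * b ^ 11 + b ^ 12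
    = 13 * a ^ 12 + (a + b) * (-78 * a ^ 11 + (a + b) *
        (b^10 - 3*a*b^9 + 6*a^2*b^8 - 10*a^3*b^7 + 15*a^4*b^6 - 21*a^5*b^5
          + 28*a^6*b^4 - 36*a^7*b^3 + 45*a^8*b^2 - 55*a^9*b + 66*a^10)) := by
  ring

/-- For coprime integers `a, b`: any common prime divisor of `a + b` and `φ₁₃(a,b)` equals `13`,
and if `13 ∣ a + b` then the 13-adic valuation of `φ₁₃(a,b)` equals `1`. -/
theorem phi_thirteen_common_divisor_and_valuation (a b : ℤ) (hab : IsCoprime a b) :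
    (∀ ℓ : ℕ, ℓ.Prime → (ℓ : ℤ) ∣ a + b →
      (ℓ : ℤ) ∣ a ^ 12 - a ^ 11 * b + a ^ 10 * b ^ 2 - a ^ 9 * b ^ 3 + a ^ 8 * b ^ 4
        - a ^ 7 * b ^ 5 + a ^ 6 * b ^ 6 - a ^ 5 * b ^ 7 + a ^ 4 * b ^ 8 - a ^ 3 * b ^ 9
        + a ^ 2 * b ^ 10 - a * b ^ 11 + b ^ 12 → ℓ = 13) ∧
    ((13 : ℤ) ∣ a + b →
      padicValInt 13 (a ^ 12 - a ^ 11 * b + a ^ 10 * b ^ 2 - a ^ 9 * b ^ 3 + a ^ 8 * b ^ 4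
        - a ^ 7 * b ^ 5 + a ^ 6 * b ^ 6 - a ^ 5 * b ^ 7 + a ^ 4 * b ^ 8 - a ^ 3 * b ^ 9
        + a ^ 2 * b ^ 10 - a * b ^ 11 + b ^ 12) = 1) := by
  have hna : ∀ ℓ : ℕ, ℓ.Prime → (ℓ : ℤ) ∣ a + b → ¬ (ℓ : ℤ) ∣ a := by
    intro ℓ hℓ hs ha
    have hb : (ℓ : ℤ) ∣ b := by
      have := dvd_sub hs ha
      simpa using this
    have hu := hab.isUnit_of_dvd' ha hb
    rw [Int.isUnit_iff] at hu
    have h2 := hℓ.two_le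
    omega
  constructor
  · intro ℓ hℓ hs hφ
    rw [phi_key a b] at hφ
    have h13 : (ℓ : ℤ) ∣ 13 * a ^ 12 := by
      have : (ℓ : ℤ) ∣ (a + b) * (-78 * a ^ 11 + (a + b) *
        (b^10 - 3*a*b^9 + 6*a^2*b^8 - 10*a^3*b^7 + 15*a^4*b^6 - 21*a^5*b^5
          + 28*a^6*b^4 - 36*a^7*b^3 + 45*a^8*b^2 - 55*a^9*b + 66*a^10)) := hs.mul_right _
      have := dvd_sub hφ this
      simpa using this
    have hp : Prime (ℓ : ℤ) := Nat.prime_iff_prime_int.mp hℓ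
    rcases hp.dvd_mul.mp h13 with h | h
    · have : (ℓ : ℤ) ∣ ((13 : ℕ) : ℤ) := by exact_mod_cast h
      have : ℓ ∣ 13 := Int.ofNat_dvd.mp this
      exact (Nat.prime_dvd_prime_iff_eq hℓ (by norm_num)).mp this
    · exact absurd (hp.dvd_of_dvd_pow h) (hna ℓ hℓ hs)
  · intro hs
    obtain ⟨k, hk⟩ := hs
    haveI : Fact (Nat.Prime 13) := ⟨by norm_num⟩
    set m : ℤ := a ^ 12 + 13 * (-6 * a ^ 11 * k + k ^ 2 *
        (b^10 - 3*a*b^9 + 6*a^2*b^8 - 10*a^3*b^7 + 15*a^4*b^6 - 21*a^5*b^5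
          + 28*a^6*b^4 - 36*a^7*b^3 + 45*a^8*b^2 - 55*a^9*b + 66*a^10)) with hm
    have hφ : a ^ 12 - a ^ 11 * b + a ^ 10 * b ^ 2 - a ^ 9 * b ^ 3 + a ^ 8 * b ^ 4
        - a ^ 7 * b ^ 5 + a ^ 6 * b ^ 6 - a ^ 5 * b ^ 7 + a ^ 4 * b ^ 8 - a ^ 3 * b ^ 9
        + a ^ 2 * b ^ 10 - a * b ^ 11 + b ^ 12 = 13 * m := by
      rw [phi_key a b, hk, hm]; ring
    have hndvd : ¬ (13 : ℤ) ∣ m := by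
      intro hd
      have h12 : (13 : ℤ) ∣ a ^ 12 := by
        have := dvd_sub hd (Dvd.intro _ rfl : (13:ℤ) ∣ 13 * (-6 * a ^ 11 * k + k ^ 2 *
          (b^10 - 3*a*b^9 + 6*a^2*b^8 - 10*a^3*b^7 + 15*a^4*b^6 - 21*a^5*b^5
            + 28*a^6*b^4 - 36*a^7*b^3 + 45*a^8*b^2 - 55*a^9*b + 66*a^10)))
        simpa [hm] using this
      have hp : Prime (13 : ℤ) := by norm_num
      have ha := hp.dvd_of_dvd_pow h12
      have : ((13:ℕ) : ℤ) ∣ a := by exact_mod_cast ha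
      exact hna 13 (by norm_num) (by push_cast; exact ⟨k, hk⟩) this
    have hm0 : m ≠ 0 := fun h => hndvd (h ▸ dvd_zero _)
    rw [hφ]
    rw [show (13 : ℤ) * m = m * (13:ℕ) by push_cast; ring]
    rw [padicValInt_mul_eq_succ m hm0]
    rw [padicValInt.eq_zero_of_not_dvd (by exact_mod_cast hndvd)]
end

section
/- Suppose a, b, c are integers with gcd(a,b)=1, a^13 + b^13 = 3 c^p for a prime p ≥ 5, and ℓ is a prime dividing a^13 + b^13 with ℓ ≠ 3 and ℓ ≢ 1 (mod 13). Then ℓ divides a + b and p divides v_ℓ(a^13 + b^13). -/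
/-!
Reducing modulo `ℓ`, `a ^ 13 = (-b) ^ 13` in `ZMod ℓ`. Since `ℓ ≢ 1 (mod 13)`, the exponent `13`
is coprime to `ℓ - 1 = #(ZMod ℓ)ˣ`, so `x ↦ x ^ 13` is injective on `ZMod ℓ` and `a ≡ -b`.
For the valuation, `ℓ ∤ 3` gives `v_ℓ(3 c ^ p) = p · v_ℓ(c)`.
-/

theorem pow_left_injective_of_coprime_card_units {G₀ : Type*} [GroupWithZero G₀] {n : ℕ}
    (hn : n ≠ 0) (hcop : (Nat.card G₀ˣ).Coprime n) : Function.Injective (· ^ n : G₀ → G₀) := by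
  intro x y hxy
  simp only at hxy
  rcases eq_or_ne x 0 with rfl | hx
  · rw [zero_pow hn, eq_comm, pow_eq_zero_iff hn] at hxy
    exact hxy.symm
  have hy : y ≠ 0 := by
    rintro rfl
    exact pow_ne_zero n hx (hxy.trans (zero_pow hn))
  have hunits : Units.mk0 x hx ^ n = Units.mk0 y hy ^ n := Units.ext (by simpa using hxy)
  simpa using congrArg Units.val (hcop.pow_left_bijective.injective hunits)

theorem ZMod.pow_left_injective_of_coprime {ℓ n : ℕ} [Fact ℓ.Prime] (hn : n ≠ 0)
    (hcop : (ℓ - 1).Coprime n) : Function.Injective (· ^ n : ZMod ℓ → ZMod ℓ) :=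
  pow_left_injective_of_coprime_card_units hn <| by
    rwa [Nat.card_eq_fintype_card, ZMod.card_units]

theorem Int.dvd_add_of_dvd_pow_add_pow {ℓ n : ℕ} (hℓ : ℓ.Prime) (hn : Odd n)
    (hcop : (ℓ - 1).Coprime n) {a b : ℤ} (h : (ℓ : ℤ) ∣ a ^ n + b ^ n) : (ℓ : ℤ) ∣ a + b := by
  have : Fact ℓ.Prime := ⟨hℓ⟩
  rw [← ZMod.intCast_zmod_eq_zero_iff_dvd] at h ⊢
  push_cast at h ⊢
  have hpow : (a : ZMod ℓ) ^ n = (-b : ZMod ℓ) ^ n := by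
    rw [hn.neg_pow]
    exact eq_neg_of_add_eq_zero_left h
  rw [ZMod.pow_left_injective_of_coprime (n := n) (by rintro rfl; simp at hn) hcop hpow,
    neg_add_cancel]

theorem Nat.coprime_sub_one_of_mod_ne_one {ℓ q : ℕ} (hq : q.Prime) (hℓ : 1 ≤ ℓ)
    (h : ℓ % q ≠ 1) : (ℓ - 1).Coprime q := by
  refine ((Nat.coprime_or_dvd_of_prime hq (ℓ - 1)).resolve_right fun hdvd => h ?_).symm
  obtain ⟨k, hk⟩ := hdvd
  rw [show ℓ = 1 + q * k by omega, Nat.add_mul_mod_self_left, Nat.mod_eq_of_lt hq.one_lt]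

theorem padicValInt_pow (p : ℕ) [Fact p.Prime] (z : ℤ) (n : ℕ) :
    padicValInt p (z ^ n) = n * padicValInt p z := by
  rw [padicValInt, Int.natAbs_pow, padicValNat.pow, padicValInt]

theorem padicValInt_mul_of_not_dvd {p : ℕ} [Fact p.Prime] {u : ℤ} (hu : ¬(p : ℤ) ∣ u) (z : ℤ) :
    padicValInt p (u * z) = padicValInt p z := by
  rcases eq_or_ne z 0 with rfl | hz
  · simp
  have hu0 : u ≠ 0 := by rintro rfl; exact hu (dvd_zero _)
  rw [padicValInt.mul hu0 hz, padicValInt.eq_zero_of_not_dvd hu, zero_add]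

theorem prime_dvd_sum_thirteen_powers_general (a b c : ℤ) (p : ℕ)
    (heq : a ^ 13 + b ^ 13 = 3 * c ^ p)
    (ℓ : ℕ) (hℓ : ℓ.Prime) (h3 : ℓ ≠ 3) (h13 : ℓ % 13 ≠ 1)
    (hdvd : (ℓ : ℤ) ∣ a ^ 13 + b ^ 13) :
    (ℓ : ℤ) ∣ a + b ∧ p ∣ padicValInt ℓ (a ^ 13 + b ^ 13) := by
  have : Fact ℓ.Prime := ⟨hℓ⟩
  have hcop : (ℓ - 1).Coprime 13 :=
    Nat.coprime_sub_one_of_mod_ne_one (by norm_num) hℓ.one_lt.le h13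
  refine ⟨Int.dvd_add_of_dvd_pow_add_pow hℓ (by decide) hcop hdvd, ?_⟩
  have hℓ3 : ¬(ℓ : ℤ) ∣ 3 := by
    exact_mod_cast fun h => h3 ((Nat.prime_dvd_prime_iff_eq hℓ Nat.prime_three).mp h)
  rw [heq, padicValInt_mul_of_not_dvd hℓ3, padicValInt_pow]
  exact dvd_mul_right p _

/-- If `gcd(a,b) = 1`, `a^13 + b^13 = 3 * c^p` for a prime `p ≥ 5`, and `ℓ` is a prime dividing
`a^13 + b^13` with `ℓ ≠ 3` and `ℓ ≢ 1 (mod 13)`, then `ℓ ∣ a + b` and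
`p ∣ v_ℓ(a^13 + b^13)`. -/
theorem prime_dvd_sum_thirteen_powers (a b c : ℤ) (hab : IsCoprime a b) (p : ℕ)
    (hp : p.Prime) (hp5 : 5 ≤ p) (heq : a ^ 13 + b ^ 13 = 3 * c ^ p)
    (ℓ : ℕ) (hℓ : ℓ.Prime) (h3 : ℓ ≠ 3) (h13 : ℓ % 13 ≠ 1)
    (hdvd : (ℓ : ℤ) ∣ a ^ 13 + b ^ 13) :
    (ℓ : ℤ) ∣ a + b ∧ p ∣ padicValInt ℓ (a ^ 13 + b ^ 13) :=
  prime_dvd_sum_thirteen_powers_general a b c p heq ℓ hℓ h3 h13 hdvd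
end

section
/- Let a, b, c be coprime integers with a*b*c ≠ 0 satisfying a^13 + b^13 = 3 c^p for a prime p. Then 3 divides a + b. -/
/-- If `a, b, c` are coprime integers with `a*b*c ≠ 0` satisfying `a^13 + b^13 = 3 * c^p` for a
prime `p`, then `3 ∣ a + b`. -/
theorem three_dvd_add_of_fermat1313p (a b c : ℤ) (hcop : Int.gcd (Int.gcd a b) c = 1)
    (hne : a * b * c ≠ 0) (p : ℕ) (hp : p.Prime) (heq : a ^ 13 + b ^ 13 = 3 * c ^ p) :
    (3 : ℤ) ∣ a + b := by
  have h13 : ∀ x : ZMod 3, x ^ 13 = x := by decide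
  have h := congrArg (fun z : ℤ => (z : ZMod 3)) heq
  push_cast at h
  rw [h13, h13] at h
  have h0 : ((a + b : ℤ) : ZMod 3) = 0 := by push_cast; simp [h, show (3 : ZMod 3) = 0 by decide]
  exact (ZMod.intCast_zmod_eq_zero_iff_dvd _ 3).mp h0
end
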